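/- With the continuous dual Hahn polynomials S_n(x²;a,b,c) = (a+b)_n (a+c)_n · ₃F₂(-n, a+ix, a-ix; a+b, a+c; 1), for all n ≥ 1 the difference relation S_n(x²;a,b,c) = S_n(x²;a,b+1,c) - n(n+a+c-1)·S_{n-1}(x²;a,b+1,c) holds. -/

import Mathlib

open Finset Complex

/-- Pochhammer symbol `(a)_k = a(a+1)⋯(a+k-1)`. -/
noncomputable def poch (a : ℂ) (k : ℕ) : ℂ := ∏ j ∈ Finset.range k, (a + j)

/-- Terminating hypergeometric series `₃F₂(-n, A, B; C, D; z)`. -/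
noncomputable def F32 (n : ℕ) (A B C D z : ℂ) : ℂ :=
  ∑ k ∈ Finset.range (n + 1),
    poch (-(n : ℂ)) k * poch A k * poch B k / (poch C k * poch D k * (k.factorial : ℂ)) * z ^ k

/-- Continuous dual Hahn polynomial
`S_n(x²;a,b,c) = (a+b)_n (a+c)_n ₃F₂(-n, a+ix, a-ix; a+b, a+c; 1)`. -/
noncomputable def cdHahn (n : ℕ) (x a b c : ℝ) : ℂ :=
  poch ((a : ℂ) + b) n * poch ((a : ℂ) + c) n *
    F32 n ((a : ℂ) + Complex.I * x) ((a : ℂ) - Complex.I * x) ((a : ℂ) + b) ((a : ℂ) + c) 1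

/-!
Multiply the `₃F₂` by `(P)_n (Q)_n` and compare the three series term by term. The `k`-th terms
share the factor `(A)_k (B)_k z^k / k!`, and after the rewritings
`n (1-n)_k = (n-k) (-n)_k` and `(n+Q-1) (Q)_{n-1} = (Q)_n` the relation reduces to
`(P)_n / (P)_k = ((P+1)_n - (n-k) (P+1)_{n-1}) / (P+1)_k`, which holds for every `k` because
`P (P+1)_k = (P)_k (P+k)`. The series of degree `n-1` has one term fewer, but the missing term
carries the factor `(1-n)_n = 0`.
-/

lemma poch_succ (z : ℂ) (k : ℕ) : poch z (k + 1) = poch z k * (z + k) :=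
  prod_range_succ _ _

lemma poch_succ' (z : ℂ) (k : ℕ) : poch z (k + 1) = z * poch (z + 1) k := by
  rw [poch, prod_range_succ', mul_comm, poch]
  push_cast
  simp only [add_zero, add_assoc, add_comm (1 : ℂ)]

lemma mul_poch_add_one (z : ℂ) (k : ℕ) : z * poch (z + 1) k = poch z k * (z + k) := by
  rw [← poch_succ, poch_succ']

lemma poch_ne_zero {z : ℂ} (hz : ∀ m : ℕ, z ≠ -m) (k : ℕ) : poch z k ≠ 0 :=
  prod_ne_zero_iff.mpr fun j _ h => hz j (eq_neg_of_add_eq_zero_left h)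

lemma poch_neg_nat_self_add_one (m : ℕ) : poch (-(m : ℂ)) (m + 1) = 0 := by
  simp [poch_succ]

lemma poch_div_poch_add_one {P : ℂ} {k : ℕ} (hP : poch P (k + 1) ≠ 0) (m : ℕ) :
    poch P (m + 1) / poch P k =
      (poch (P + 1) (m + 1) - ((m : ℂ) + 1 - k) * poch (P + 1) m) / poch (P + 1) k := by
  have hPk : poch P k ≠ 0 := by rw [poch_succ] at hP; exact left_ne_zero_of_mul hP
  have hP1k : poch (P + 1) k ≠ 0 := by rw [poch_succ'] at hP; exact right_ne_zero_of_mul hP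
  rw [div_eq_div_iff hPk hP1k, poch_succ', poch_succ (P + 1)]
  linear_combination poch (P + 1) m * mul_poch_add_one P k

/-- The `k`-th term of `(P)_n (Q)_n ₃F₂(-n, A, B; P, Q; z)`. -/
noncomputable def scaledF32Term (n : ℕ) (A B P Q z : ℂ) (k : ℕ) : ℂ :=
  poch (-(n : ℂ)) k * (poch P n / poch P k) * (poch Q n / poch Q k) *
    (poch A k * poch B k / k.factorial * z ^ k)

lemma poch_mul_F32_eq_sum (n : ℕ) (A B P Q z : ℂ) :
    poch P n * poch Q n * F32 n A B P Q z =
      ∑ k ∈ range (n + 1), scaledF32Term n A B P Q z k := by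
  rw [F32, mul_sum]
  exact sum_congr rfl fun k _ => by rw [scaledF32Term]; ring

lemma scaledF32Term_self_add_one (m : ℕ) (A B P Q z : ℂ) :
    scaledF32Term m A B P Q z (m + 1) = 0 := by
  rw [scaledF32Term, poch_neg_nat_self_add_one]
  ring

lemma scaledF32Term_succ (A B Q z : ℂ) {P : ℂ} {k : ℕ} (hP : poch P (k + 1) ≠ 0) (m : ℕ) :
    scaledF32Term (m + 1) A B P Q z k =
      scaledF32Term (m + 1) A B (P + 1) Q z k -
        ((m : ℂ) + 1) * (m + Q) * scaledF32Term m A B (P + 1) Q z k := by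
  have hneg := mul_poch_add_one (-((m : ℂ) + 1)) k
  rw [show -((m : ℂ) + 1) + 1 = -m by ring] at hneg
  simp only [scaledF32Term]
  push_cast
  rw [poch_div_poch_add_one hP, poch_succ Q m]
  linear_combination -(poch Q m * (Q + m) / poch Q k * poch (P + 1) m / poch (P + 1) k *
    (poch A k * poch B k / k.factorial * z ^ k)) * hneg

theorem poch_mul_F32_succ (A B Q z : ℂ) {P : ℂ} (hP : ∀ k, poch P k ≠ 0) (m : ℕ) :
    poch P (m + 1) * poch Q (m + 1) * F32 (m + 1) A B P Q z =
      poch (P + 1) (m + 1) * poch Q (m + 1) * F32 (m + 1) A B (P + 1) Q z -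
        ((m : ℂ) + 1) * (m + Q) * (poch (P + 1) m * poch Q m * F32 m A B (P + 1) Q z) := by
  have hextend : ∑ k ∈ range (m + 1), scaledF32Term m A B (P + 1) Q z k =
      ∑ k ∈ range (m + 1 + 1), scaledF32Term m A B (P + 1) Q z k := by
    rw [sum_range_succ _ (m + 1), scaledF32Term_self_add_one, add_zero]
  rw [poch_mul_F32_eq_sum, poch_mul_F32_eq_sum, poch_mul_F32_eq_sum, hextend, mul_sum,
    ← sum_sub_distrib]
  exact sum_congr rfl fun k _ => scaledF32Term_succ A B Q z (hP (k + 1)) m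

theorem cdHahn_difference_relation_two_general (n : ℕ) (hn : 1 ≤ n) (x a b c : ℝ)
    (hab : ∀ m : ℕ, a + b ≠ -(m : ℝ)) :
    cdHahn n x a b c =
      cdHahn n x a (b + 1) c - (n : ℂ) * ((n : ℂ) + a + c - 1) * cdHahn (n - 1) x a (b + 1) c := by
  obtain ⟨m, rfl⟩ := Nat.exists_eq_add_of_le' hn
  have hP : ∀ k, poch ((a : ℂ) + b) k ≠ 0 :=
    poch_ne_zero fun m h => hab m (by exact_mod_cast h)
  have hrel := poch_mul_F32_succ ((a : ℂ) + I * x) ((a : ℂ) - I * x) ((a : ℂ) + c) 1 hP m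
  simp only [cdHahn, Nat.add_sub_cancel]
  push_cast
  rw [← add_assoc, hrel]
  ring

/-- Difference relation
`S_n(x²;a,b,c) = S_n(x²;a,b+1,c) - n(n+a+c-1)·S_{n-1}(x²;a,b+1,c)` for `n ≥ 1`. -/
theorem cdHahn_difference_relation_two (n : ℕ) (hn : 1 ≤ n) (x a b c : ℝ)
    (hab : ∀ m : ℕ, a + b ≠ -(m : ℝ)) (hac : ∀ m : ℕ, a + c ≠ -(m : ℝ)) :
    cdHahn n x a b c =
      cdHahn n x a (b + 1) c - (n : ℂ) * ((n : ℂ) + a + c - 1) * cdHahn (n - 1) x a (b + 1) c :=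
  cdHahn_difference_relation_two_general n hn x a b c hab
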